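/- Let H be a weak bialgebra. The unit object H_s of the monoidal category M^H of right H-comodules is a Frobenius algebra object in M^H; equivalently (via the identification of categorical and formulaic notions), H_s is a right H-comodule Frobenius algebra. -/
import Mathlib
open TensorProduct LinearMap
set_option linter.unusedSectionVars false
set_option maxHeartbeats 1000000
set_option synthInstance.maxHeartbeats 400000
open TensorProduct LinearMap

namespace WeakBialgebraStmt

variable (k : Type*) [Field k] (H : Type*) [Ring H] [Algebra k H] [Coalgebra k H]

/-- `ε ⊗ ε` followed by multiplication of scalars, as a linear map `H ⊗ H → k`. -/
noncomputable def counit2 : H ⊗[k] H →ₗ[k] k :=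
  (LinearMap.mul' k k) ∘ₗ TensorProduct.map (Coalgebra.counit) (Coalgebra.counit)

/-- The weak bialgebra axioms for an algebra-and-coalgebra `H`:
comultiplication is multiplicative, the counit is weakly multiplicative
(`ε(abc) = ε(ab₁)ε(b₂c) = ε(ab₂)ε(b₁c)`), and the unit is weakly comultiplicative
(`Δ²(1) = (Δ(1)⊗1)(1⊗Δ(1)) = (1⊗Δ(1))(Δ(1)⊗1)`). -/
structure IsWeakBialgebra : Prop where
  comul_mul : ∀ a b : H,
    Coalgebra.comul (R := k) (a * b) = Coalgebra.comul (R := k) a * Coalgebra.comul (R := k) b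
  counit_weak : ∀ a b c : H, Coalgebra.counit (R := k) (a * b * c)
    = counit2 k H ((a ⊗ₜ[k] (1 : H)) * Coalgebra.comul (R := k) b * ((1 : H) ⊗ₜ[k] c))
  counit_weak' : ∀ a b c : H, Coalgebra.counit (R := k) (a * b * c)
    = counit2 k H (((1 : H) ⊗ₜ[k] a) * Coalgebra.comul (R := k) b * (c ⊗ₜ[k] (1 : H)))
  comul_one : rTensor H (Coalgebra.comul (R := k)) (Coalgebra.comul (R := k) (1 : H))
    = (Coalgebra.comul (R := k) (1 : H) ⊗ₜ[k] (1 : H)) *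
        ((TensorProduct.assoc k H H H).symm ((1 : H) ⊗ₜ[k] Coalgebra.comul (R := k) (1 : H)))
  comul_one' : rTensor H (Coalgebra.comul (R := k)) (Coalgebra.comul (R := k) (1 : H))
    = ((TensorProduct.assoc k H H H).symm ((1 : H) ⊗ₜ[k] Coalgebra.comul (R := k) (1 : H))) *
        (Coalgebra.comul (R := k) (1 : H) ⊗ₜ[k] (1 : H))

/-- The source counital map `ε_s(x) = 1₁ ε(x 1₂)`, obtained by applying `id ⊗ ε` to
`(1 ⊗ x) · Δ(1) = 1₁ ⊗ x 1₂`. -/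
noncomputable def εs : H →ₗ[k] H :=
  (TensorProduct.rid k H).toLinearMap ∘ₗ lTensor H (Coalgebra.counit) ∘ₗ
    mulRight k (Coalgebra.comul (R := k) (1 : H)) ∘ₗ TensorProduct.mk k H H 1

/-- The target counital map `ε_t(x) = ε(1₁ x) 1₂`, obtained by applying `ε ⊗ id` to
`Δ(1) · (x ⊗ 1) = 1₁ x ⊗ 1₂`. -/
noncomputable def εt : H →ₗ[k] H :=
  (TensorProduct.lid k H).toLinearMap ∘ₗ rTensor H (Coalgebra.counit) ∘ₗ
    mulLeft k (Coalgebra.comul (R := k) (1 : H)) ∘ₗ (TensorProduct.mk k H H).flip 1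

/-- The comultiplication `Δ_s : H_s → H_s ⊗ H_s`, `y ↦ 1₁ ⊗ ε_s(y 1₂)`, defined on all
of `H` by applying `id ⊗ ε_s` to `(1 ⊗ y)·Δ(1) = 1₁ ⊗ y 1₂`. -/
noncomputable def Δs : H →ₗ[k] H ⊗[k] H :=
  lTensor H (εs k H) ∘ₗ mulRight k (Coalgebra.comul (R := k) (1 : H)) ∘ₗ
    TensorProduct.mk k H H 1

/-- `P(x) = 1₁ ε(1₂ x)`, an auxiliary counital-type map. -/
noncomputable def Pm (k : Type*) [Field k] (H : Type*) [Ring H] [Algebra k H]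
    [Coalgebra k H] : H →ₗ[k] H :=
  (TensorProduct.rid k H).toLinearMap ∘ₗ lTensor H (Coalgebra.counit : H →ₗ[k] k) ∘ₗ
    mulLeft k (Coalgebra.comul (R := k) (1 : H)) ∘ₗ TensorProduct.mk k H H 1

section Aux

variable {k : Type*} [Field k] {H : Type*} [Ring H] [Algebra k H] [Coalgebra k H]

lemma one_tmul_mul (x : H) (v : H ⊗[k] H) :
    (1 ⊗ₜ[k] x) * v = lTensor H (mulLeft k x) v := by
  induction v using TensorProduct.induction_on with
  | zero => simp
  | tmul a b => simp [Algebra.TensorProduct.tmul_mul_tmul]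
  | add u v hu hv => simp [mul_add, hu, hv]

lemma mul_one_tmul (x : H) (v : H ⊗[k] H) :
    v * (1 ⊗ₜ[k] x) = lTensor H (mulRight k x) v := by
  induction v using TensorProduct.induction_on with
  | zero => simp
  | tmul a b => simp [Algebra.TensorProduct.tmul_mul_tmul]
  | add u v hu hv => simp [add_mul, hu, hv]


lemma es_eq (x : H) :
    εs k H x = (TensorProduct.rid k H)
      (lTensor H ((Coalgebra.counit : H →ₗ[k] k) ∘ₗ mulLeft k x)
        (Coalgebra.comul (R := k) (1 : H))) := by
  simp [εs, one_tmul_mul, ← lTensor_comp_apply]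

lemma Pm_eq (x : H) :
    Pm k H x = (TensorProduct.rid k H)
      (lTensor H ((Coalgebra.counit : H →ₗ[k] k) ∘ₗ mulRight k x)
        (Coalgebra.comul (R := k) (1 : H))) := by
  simp [Pm, mul_one_tmul, ← lTensor_comp_apply]

lemma et_eq (x : H) :
    εt k H x = (TensorProduct.lid k H)
      (rTensor H ((Coalgebra.counit : H →ₗ[k] k) ∘ₗ mulRight k x)
        (Coalgebra.comul (R := k) (1 : H))) := by
  simp only [εt, coe_comp, LinearEquiv.coe_coe, Function.comp_apply, TensorProduct.mk_apply,
    flip_apply, mulLeft_apply]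
  rw [show (Coalgebra.comul (R := k) (1:H)) * (x ⊗ₜ[k] (1:H))
      = rTensor H (mulRight k x) (Coalgebra.comul (R := k) (1:H)) from ?_]
  · rw [← rTensor_comp_apply]
  · induction (Coalgebra.comul (R := k) (1:H)) using TensorProduct.induction_on with
    | zero => simp
    | tmul a b => simp [Algebra.TensorProduct.tmul_mul_tmul]
    | add u v hu hv => simp [add_mul, hu, hv]

lemma Ds_eq (x : H) :
    Δs k H x = lTensor H (εs k H ∘ₗ mulLeft k x) (Coalgebra.comul (R := k) (1 : H)) := by
  simp [Δs, one_tmul_mul, ← lTensor_comp_apply]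

lemma counit2_tmul (a b : H) :
    counit2 k H (a ⊗ₜ[k] b) = Coalgebra.counit (R := k) a * Coalgebra.counit (R := k) b := by
  simp only [counit2, coe_comp, Function.comp_apply, TensorProduct.map_tmul, mul'_apply]

variable {S : Finset (H × H)}

lemma es_apply (hS : Coalgebra.comul (R := k) (1:H) = ∑ p ∈ S, p.1 ⊗ₜ[k] p.2) (x : H) :
    εs k H x = ∑ p ∈ S, Coalgebra.counit (R := k) (x * p.2) • p.1 := by
  rw [es_eq, hS]
  simp [TensorProduct.smul_tmul']

lemma Pm_apply (hS : Coalgebra.comul (R := k) (1:H) = ∑ p ∈ S, p.1 ⊗ₜ[k] p.2) (x : H) :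
    Pm k H x = ∑ p ∈ S, Coalgebra.counit (R := k) (p.2 * x) • p.1 := by
  rw [Pm_eq, hS]
  simp [TensorProduct.smul_tmul']

lemma et_apply (hS : Coalgebra.comul (R := k) (1:H) = ∑ p ∈ S, p.1 ⊗ₜ[k] p.2) (x : H) :
    εt k H x = ∑ p ∈ S, Coalgebra.counit (R := k) (p.1 * x) • p.2 := by
  rw [et_eq, hS]
  simp [TensorProduct.smul_tmul']

lemma Ds_apply (hS : Coalgebra.comul (R := k) (1:H) = ∑ p ∈ S, p.1 ⊗ₜ[k] p.2) (x : H) :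
    Δs k H x = ∑ p ∈ S, p.1 ⊗ₜ[k] (εs k H (x * p.2)) := by
  rw [Ds_eq, hS]
  simp

lemma sum_counit_left (hS : Coalgebra.comul (R := k) (1:H) = ∑ p ∈ S, p.1 ⊗ₜ[k] p.2) :
    ∑ p ∈ S, Coalgebra.counit (R := k) p.1 • p.2 = 1 := by
  have h := Coalgebra.rTensor_counit_comul (R := k) (1 : H)
  rw [hS] at h
  have := congrArg (TensorProduct.lid k H) h
  simpa using this

lemma sum_counit_right (hS : Coalgebra.comul (R := k) (1:H) = ∑ p ∈ S, p.1 ⊗ₜ[k] p.2) :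
    ∑ p ∈ S, Coalgebra.counit (R := k) p.2 • p.1 = 1 := by
  have h := Coalgebra.lTensor_counit_comul (R := k) (1 : H)
  rw [hS] at h
  have := congrArg (TensorProduct.rid k H) h
  simpa using this

end Aux

section Aux2

variable {k : Type*} [Field k] {H : Type*} [Ring H] [Algebra k H] [Coalgebra k H]
variable {S : Finset (H × H)}

/-- `ε(a c) = Σ ε(1₁ c) ε(a 1₂)` (axiom `counit_weak'` at `b = 1`). -/
lemma E3 (hwb : IsWeakBialgebra k H)
    (hS : Coalgebra.comul (R := k) (1:H) = ∑ p ∈ S, p.1 ⊗ₜ[k] p.2) (a c : H) :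
    Coalgebra.counit (R := k) (a * c)
      = ∑ p ∈ S, Coalgebra.counit (R := k) (p.1 * c) * Coalgebra.counit (R := k) (a * p.2) := by
  have h := hwb.counit_weak' a 1 c
  rw [mul_one, hS] at h
  simpa [Finset.mul_sum, Finset.sum_mul, Algebra.TensorProduct.tmul_mul_tmul, counit2] using h

/-- `ε(a c) = Σ ε(a 1₁) ε(1₂ c)` (axiom `counit_weak` at `b = 1`). -/
lemma E4 (hwb : IsWeakBialgebra k H)
    (hS : Coalgebra.comul (R := k) (1:H) = ∑ p ∈ S, p.1 ⊗ₜ[k] p.2) (a c : H) :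
    Coalgebra.counit (R := k) (a * c)
      = ∑ p ∈ S, Coalgebra.counit (R := k) (a * p.1) * Coalgebra.counit (R := k) (p.2 * c) := by
  have h := hwb.counit_weak a 1 c
  rw [mul_one, hS] at h
  simpa [Finset.mul_sum, Finset.sum_mul, Algebra.TensorProduct.tmul_mul_tmul, counit2] using h

/-- `ε(ε_s(x) u) = ε(x u)`. -/
lemma S1 (hwb : IsWeakBialgebra k H)
    (hS : Coalgebra.comul (R := k) (1:H) = ∑ p ∈ S, p.1 ⊗ₜ[k] p.2) (x u : H) :
    Coalgebra.counit (R := k) (εs k H x * u) = Coalgebra.counit (R := k) (x * u) := by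
  simp only [es_apply hS, Finset.sum_mul, smul_mul_assoc, map_sum, map_smul, smul_eq_mul]
  rw [E3 hwb hS x u]
  exact Finset.sum_congr rfl fun p _ => mul_comm _ _

/-- `ε(x ε_t(u)) = ε(x u)`. -/
lemma S3 (hwb : IsWeakBialgebra k H)
    (hS : Coalgebra.comul (R := k) (1:H) = ∑ p ∈ S, p.1 ⊗ₜ[k] p.2) (x u : H) :
    Coalgebra.counit (R := k) (x * εt k H u) = Coalgebra.counit (R := k) (x * u) := by
  simp only [et_apply hS, Finset.mul_sum, mul_smul_comm, map_sum, map_smul, smul_eq_mul]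
  rw [E3 hwb hS x u]

/-- `ε(c P(x)) = ε(c x)`. -/
lemma S1op (hwb : IsWeakBialgebra k H)
    (hS : Coalgebra.comul (R := k) (1:H) = ∑ p ∈ S, p.1 ⊗ₜ[k] p.2) (c x : H) :
    Coalgebra.counit (R := k) (c * Pm k H x) = Coalgebra.counit (R := k) (c * x) := by
  simp only [Pm_apply hS, Finset.mul_sum, mul_smul_comm, map_sum, map_smul, smul_eq_mul]
  rw [E4 hwb hS c x]
  exact Finset.sum_congr rfl fun p _ => mul_comm _ _

/-- `Δ(1)² = Δ(1)`. -/
lemma one_idem (hwb : IsWeakBialgebra k H) :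
    Coalgebra.comul (R := k) (1:H) * Coalgebra.comul (R := k) (1:H)
      = Coalgebra.comul (R := k) (1:H) := by
  have := hwb.comul_mul 1 1
  rw [mul_one] at this
  exact this.symm

/-- sum form of `comul_one'`. -/
lemma A2sum (hwb : IsWeakBialgebra k H)
    (hS : Coalgebra.comul (R := k) (1:H) = ∑ p ∈ S, p.1 ⊗ₜ[k] p.2) :
    ∑ p ∈ S, (Coalgebra.comul (R := k) p.1) ⊗ₜ[k] p.2
      = ∑ p ∈ S, ∑ q ∈ S, (p.1 ⊗ₜ[k] (q.1*p.2)) ⊗ₜ[k] q.2 := by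
  have h := hwb.comul_one'
  rw [hS] at h
  simp only [map_sum, rTensor_tmul, tmul_sum, sum_tmul, TensorProduct.assoc_symm_tmul,
    Finset.mul_sum, Finset.sum_mul, Algebra.TensorProduct.tmul_mul_tmul, one_mul, mul_one] at h
  rw [h, Finset.sum_comm]

/-- sum form of `comul_one`. -/
lemma A2'sum (hwb : IsWeakBialgebra k H)
    (hS : Coalgebra.comul (R := k) (1:H) = ∑ p ∈ S, p.1 ⊗ₜ[k] p.2) :
    ∑ p ∈ S, (Coalgebra.comul (R := k) p.1) ⊗ₜ[k] p.2
      = ∑ p ∈ S, ∑ q ∈ S, (p.1 ⊗ₜ[k] (p.2*q.1)) ⊗ₜ[k] q.2 := by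
  have h := hwb.comul_one
  rw [hS] at h
  simp only [map_sum, rTensor_tmul, tmul_sum, sum_tmul, TensorProduct.assoc_symm_tmul,
    Finset.mul_sum, Finset.sum_mul, Algebra.TensorProduct.tmul_mul_tmul, one_mul, mul_one] at h
  rw [h, Finset.sum_comm]

/-- assoc'd sum form of `comul_one'`. -/
lemma A3sum (hwb : IsWeakBialgebra k H)
    (hS : Coalgebra.comul (R := k) (1:H) = ∑ p ∈ S, p.1 ⊗ₜ[k] p.2) :
    ∑ p ∈ S, p.1 ⊗ₜ[k] (Coalgebra.comul (R := k) p.2)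
      = ∑ p ∈ S, ∑ q ∈ S, p.1 ⊗ₜ[k] ((q.1*p.2) ⊗ₜ[k] q.2) := by
  have h := Coalgebra.coassoc_apply (R := k) (1:H)
  rw [hwb.comul_one', hS] at h
  simp only [map_sum, lTensor_tmul, tmul_sum, sum_tmul, TensorProduct.assoc_symm_tmul,
    Finset.mul_sum, Finset.sum_mul, Algebra.TensorProduct.tmul_mul_tmul, one_mul, mul_one,
    LinearEquiv.coe_coe, TensorProduct.assoc_tmul] at h
  rw [← h, Finset.sum_comm]

/-- assoc'd sum form of `comul_one`. -/
lemma A3'sum (hwb : IsWeakBialgebra k H)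
    (hS : Coalgebra.comul (R := k) (1:H) = ∑ p ∈ S, p.1 ⊗ₜ[k] p.2) :
    ∑ p ∈ S, p.1 ⊗ₜ[k] (Coalgebra.comul (R := k) p.2)
      = ∑ p ∈ S, ∑ q ∈ S, p.1 ⊗ₜ[k] ((p.2*q.1) ⊗ₜ[k] q.2) := by
  have h := Coalgebra.coassoc_apply (R := k) (1:H)
  rw [hwb.comul_one, hS] at h
  simp only [map_sum, lTensor_tmul, tmul_sum, sum_tmul, TensorProduct.assoc_symm_tmul,
    Finset.mul_sum, Finset.sum_mul, Algebra.TensorProduct.tmul_mul_tmul, one_mul, mul_one,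
    LinearEquiv.coe_coe, TensorProduct.assoc_tmul] at h
  rw [← h, Finset.sum_comm]

end Aux2

section Aux3

variable {k : Type*} [Field k] {H : Type*} [Ring H] [Algebra k H] [Coalgebra k H]
variable {S : Finset (H × H)}

lemma comul_es_l (hwb : IsWeakBialgebra k H)
    (hS : Coalgebra.comul (R := k) (1:H) = ∑ p ∈ S, p.1 ⊗ₜ[k] p.2) (x : H) :
    Coalgebra.comul (R := k) (εs k H x)
      = (1 ⊗ₜ[k] εs k H x) * Coalgebra.comul (R := k) (1:H) := by
  have h := congrArg (fun w => (TensorProduct.rid k (H ⊗[k] H))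
      (lTensor (H ⊗[k] H) ((Coalgebra.counit : H →ₗ[k] k) ∘ₗ mulLeft k x) w)) (A2sum hwb hS)
  simp only [map_sum, lTensor_tmul, coe_comp, Function.comp_apply, mulLeft_apply,
    LinearEquiv.coe_coe, TensorProduct.rid_tmul] at h
  rw [es_apply hS, map_sum]
  simp only [map_smul]
  rw [h, hS]
  simp only [tmul_sum, tmul_smul, Finset.sum_mul, Finset.mul_sum, smul_mul_assoc,
    Algebra.TensorProduct.tmul_mul_tmul, one_mul]

lemma comul_es_r (hwb : IsWeakBialgebra k H)
    (hS : Coalgebra.comul (R := k) (1:H) = ∑ p ∈ S, p.1 ⊗ₜ[k] p.2) (x : H) :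
    Coalgebra.comul (R := k) (εs k H x)
      = Coalgebra.comul (R := k) (1:H) * (1 ⊗ₜ[k] εs k H x) := by
  have h := congrArg (fun w => (TensorProduct.rid k (H ⊗[k] H))
      (lTensor (H ⊗[k] H) ((Coalgebra.counit : H →ₗ[k] k) ∘ₗ mulLeft k x) w)) (A2'sum hwb hS)
  simp only [map_sum, lTensor_tmul, coe_comp, Function.comp_apply, mulLeft_apply,
    LinearEquiv.coe_coe, TensorProduct.rid_tmul] at h
  rw [es_apply hS, map_sum]
  simp only [map_smul]
  rw [h, hS]
  simp only [tmul_sum, tmul_smul, Finset.sum_mul, Finset.mul_sum, mul_smul_comm,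
    Algebra.TensorProduct.tmul_mul_tmul, mul_one, Finset.smul_sum]
  rw [Finset.sum_comm]

lemma comul_Pm_l (hwb : IsWeakBialgebra k H)
    (hS : Coalgebra.comul (R := k) (1:H) = ∑ p ∈ S, p.1 ⊗ₜ[k] p.2) (x : H) :
    Coalgebra.comul (R := k) (Pm k H x)
      = (1 ⊗ₜ[k] Pm k H x) * Coalgebra.comul (R := k) (1:H) := by
  have h := congrArg (fun w => (TensorProduct.rid k (H ⊗[k] H))
      (lTensor (H ⊗[k] H) ((Coalgebra.counit : H →ₗ[k] k) ∘ₗ mulRight k x) w)) (A2sum hwb hS)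
  simp only [map_sum, lTensor_tmul, coe_comp, Function.comp_apply, mulRight_apply,
    LinearEquiv.coe_coe, TensorProduct.rid_tmul] at h
  rw [Pm_apply hS, map_sum]
  simp only [map_smul]
  rw [h, hS]
  simp only [tmul_sum, tmul_smul, Finset.sum_mul, Finset.mul_sum, smul_mul_assoc,
    Algebra.TensorProduct.tmul_mul_tmul, one_mul]

lemma comul_Pm_r (hwb : IsWeakBialgebra k H)
    (hS : Coalgebra.comul (R := k) (1:H) = ∑ p ∈ S, p.1 ⊗ₜ[k] p.2) (x : H) :
    Coalgebra.comul (R := k) (Pm k H x)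
      = Coalgebra.comul (R := k) (1:H) * (1 ⊗ₜ[k] Pm k H x) := by
  have h := congrArg (fun w => (TensorProduct.rid k (H ⊗[k] H))
      (lTensor (H ⊗[k] H) ((Coalgebra.counit : H →ₗ[k] k) ∘ₗ mulRight k x) w)) (A2'sum hwb hS)
  simp only [map_sum, lTensor_tmul, coe_comp, Function.comp_apply, mulRight_apply,
    LinearEquiv.coe_coe, TensorProduct.rid_tmul] at h
  rw [Pm_apply hS, map_sum]
  simp only [map_smul]
  rw [h, hS]
  simp only [tmul_sum, tmul_smul, Finset.sum_mul, Finset.mul_sum, mul_smul_comm,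
    Algebra.TensorProduct.tmul_mul_tmul, mul_one, Finset.smul_sum]
  rw [Finset.sum_comm]

lemma comul_et_l (hwb : IsWeakBialgebra k H)
    (hS : Coalgebra.comul (R := k) (1:H) = ∑ p ∈ S, p.1 ⊗ₜ[k] p.2) (x : H) :
    Coalgebra.comul (R := k) (εt k H x)
      = (εt k H x ⊗ₜ[k] 1) * Coalgebra.comul (R := k) (1:H) := by
  have h := congrArg (fun w => (TensorProduct.lid k (H ⊗[k] H))
      (rTensor (H ⊗[k] H) ((Coalgebra.counit : H →ₗ[k] k) ∘ₗ mulRight k x) w)) (A3'sum hwb hS)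
  simp only [map_sum, rTensor_tmul, coe_comp, Function.comp_apply, mulRight_apply,
    LinearEquiv.coe_coe, TensorProduct.lid_tmul] at h
  rw [et_apply hS, map_sum]
  simp only [map_smul]
  rw [h, hS]
  simp only [sum_tmul, smul_tmul', Finset.sum_mul, Finset.mul_sum, smul_mul_assoc,
    Algebra.TensorProduct.tmul_mul_tmul, one_mul]
  rw [Finset.sum_comm]

lemma comul_et_r (hwb : IsWeakBialgebra k H)
    (hS : Coalgebra.comul (R := k) (1:H) = ∑ p ∈ S, p.1 ⊗ₜ[k] p.2) (x : H) :
    Coalgebra.comul (R := k) (εt k H x)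
      = Coalgebra.comul (R := k) (1:H) * (εt k H x ⊗ₜ[k] 1) := by
  have h := congrArg (fun w => (TensorProduct.lid k (H ⊗[k] H))
      (rTensor (H ⊗[k] H) ((Coalgebra.counit : H →ₗ[k] k) ∘ₗ mulRight k x) w)) (A3sum hwb hS)
  simp only [map_sum, rTensor_tmul, coe_comp, Function.comp_apply, mulRight_apply,
    LinearEquiv.coe_coe, TensorProduct.lid_tmul] at h
  rw [et_apply hS, map_sum]
  simp only [map_smul]
  rw [h, hS]
  simp only [sum_tmul, smul_tmul', Finset.sum_mul, Finset.mul_sum, mul_smul_comm,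
    Algebra.TensorProduct.tmul_mul_tmul, mul_one, Finset.smul_sum]

end Aux3

/-- Membership in the source base: both commutation forms of the coproduct. -/
def IsHs (k : Type*) [Field k] (H : Type*) [Ring H] [Algebra k H] [Coalgebra k H]
    (y : H) : Prop :=
  Coalgebra.comul (R := k) y = (1 ⊗ₜ[k] y) * Coalgebra.comul (R := k) (1:H) ∧
  Coalgebra.comul (R := k) y = Coalgebra.comul (R := k) (1:H) * (1 ⊗ₜ[k] y)

/-- Membership in the target base. -/
def IsHt (k : Type*) [Field k] (H : Type*) [Ring H] [Algebra k H] [Coalgebra k H]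
    (y : H) : Prop :=
  Coalgebra.comul (R := k) y = (y ⊗ₜ[k] 1) * Coalgebra.comul (R := k) (1:H) ∧
  Coalgebra.comul (R := k) y = Coalgebra.comul (R := k) (1:H) * (y ⊗ₜ[k] 1)

section Aux4

variable {k : Type*} [Field k] {H : Type*} [Ring H] [Algebra k H] [Coalgebra k H]
variable {S : Finset (H × H)}

lemma fix_es {h : H}
    (hΔ : Coalgebra.comul (R := k) h = (1 ⊗ₜ[k] h) * Coalgebra.comul (R := k) (1:H)) :
    εs k H h = h := by
  have : εs k H h = (TensorProduct.rid k H)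
      (lTensor H (Coalgebra.counit : H →ₗ[k] k) (Coalgebra.comul (R := k) h)) := by
    rw [hΔ]
    simp [εs]
  rw [this, Coalgebra.lTensor_counit_comul]
  simp

lemma fix_Pm {h : H}
    (hΔ : Coalgebra.comul (R := k) h = Coalgebra.comul (R := k) (1:H) * (1 ⊗ₜ[k] h)) :
    Pm k H h = h := by
  have : Pm k H h = (TensorProduct.rid k H)
      (lTensor H (Coalgebra.counit : H →ₗ[k] k) (Coalgebra.comul (R := k) h)) := by
    rw [hΔ]
    simp [Pm]
  rw [this, Coalgebra.lTensor_counit_comul]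
  simp

lemma fix_et {h : H}
    (hΔ : Coalgebra.comul (R := k) h = Coalgebra.comul (R := k) (1:H) * (h ⊗ₜ[k] 1)) :
    εt k H h = h := by
  have : εt k H h = (TensorProduct.lid k H)
      (rTensor H (Coalgebra.counit : H →ₗ[k] k) (Coalgebra.comul (R := k) h)) := by
    rw [hΔ]
    simp [εt]
  rw [this, Coalgebra.rTensor_counit_comul]
  simp

lemma isHs_es (hwb : IsWeakBialgebra k H)
    (hS : Coalgebra.comul (R := k) (1:H) = ∑ p ∈ S, p.1 ⊗ₜ[k] p.2) (x : H) :
    IsHs k H (εs k H x) :=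
  ⟨comul_es_l hwb hS x, comul_es_r hwb hS x⟩

lemma isHs_Pm (hwb : IsWeakBialgebra k H)
    (hS : Coalgebra.comul (R := k) (1:H) = ∑ p ∈ S, p.1 ⊗ₜ[k] p.2) (x : H) :
    IsHs k H (Pm k H x) :=
  ⟨comul_Pm_l hwb hS x, comul_Pm_r hwb hS x⟩

lemma isHt_et (hwb : IsWeakBialgebra k H)
    (hS : Coalgebra.comul (R := k) (1:H) = ∑ p ∈ S, p.1 ⊗ₜ[k] p.2) (x : H) :
    IsHt k H (εt k H x) :=
  ⟨comul_et_l hwb hS x, comul_et_r hwb hS x⟩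

lemma IsHs.es_fix {y : H} (hy : IsHs k H y) : εs k H y = y := fix_es hy.1

lemma IsHs.Pm_fix {y : H} (hy : IsHs k H y) : Pm k H y = y := fix_Pm hy.2

lemma IsHt.et_fix {y : H} (hy : IsHt k H y) : εt k H y = y := fix_et hy.2

lemma isHs_one : IsHs k H 1 := by
  constructor <;>
    rw [show ((1:H) ⊗ₜ[k] (1:H)) = (1 : H ⊗[k] H) from rfl] <;> simp

lemma isHt_one : IsHt k H 1 := by
  constructor <;>
    rw [show ((1:H) ⊗ₜ[k] (1:H)) = (1 : H ⊗[k] H) from rfl] <;> simp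

lemma IsHs.mul (hwb : IsWeakBialgebra k H) {y z : H}
    (hy : IsHs k H y) (hz : IsHs k H z) : IsHs k H (y * z) := by
  have hzc : (1 ⊗ₜ[k] z) * Coalgebra.comul (R := k) (1:H)
      = Coalgebra.comul (R := k) (1:H) * (1 ⊗ₜ[k] z) := hz.1.symm.trans hz.2
  have hyc : (1 ⊗ₜ[k] y) * Coalgebra.comul (R := k) (1:H)
      = Coalgebra.comul (R := k) (1:H) * (1 ⊗ₜ[k] y) := hy.1.symm.trans hy.2
  constructor
  · rw [hwb.comul_mul, hy.1, hz.1, mul_assoc,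
      ← mul_assoc (Coalgebra.comul (R := k) (1:H)) (1 ⊗ₜ[k] z), ← hzc, mul_assoc,
      one_idem hwb, ← mul_assoc, Algebra.TensorProduct.tmul_mul_tmul, one_mul]
  · rw [hwb.comul_mul, hy.2, hz.2, mul_assoc, ← mul_assoc (1 ⊗ₜ[k] y), hyc, mul_assoc,
      ← mul_assoc, ← mul_assoc, one_idem hwb, mul_assoc,
      Algebra.TensorProduct.tmul_mul_tmul, one_mul]

lemma IsHt.mul (hwb : IsWeakBialgebra k H) {y z : H}
    (hy : IsHt k H y) (hz : IsHt k H z) : IsHt k H (y * z) := by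
  have hyc : (y ⊗ₜ[k] 1) * Coalgebra.comul (R := k) (1:H)
      = Coalgebra.comul (R := k) (1:H) * (y ⊗ₜ[k] 1) := hy.1.symm.trans hy.2
  have hzc : (z ⊗ₜ[k] 1) * Coalgebra.comul (R := k) (1:H)
      = Coalgebra.comul (R := k) (1:H) * (z ⊗ₜ[k] 1) := hz.1.symm.trans hz.2
  constructor
  · rw [hwb.comul_mul, hy.1, hz.1, mul_assoc,
      ← mul_assoc (Coalgebra.comul (R := k) (1:H)) (z ⊗ₜ[k] 1), ← hzc, mul_assoc,
      one_idem hwb, ← mul_assoc, Algebra.TensorProduct.tmul_mul_tmul, mul_one]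
  · rw [hwb.comul_mul, hy.2, hz.2, mul_assoc, ← mul_assoc (y ⊗ₜ[k] 1), hyc, mul_assoc,
      ← mul_assoc, ← mul_assoc, one_idem hwb, mul_assoc,
      Algebra.TensorProduct.tmul_mul_tmul, mul_one]

lemma F2 (hwb : IsWeakBialgebra k H)
    (hS : Coalgebra.comul (R := k) (1:H) = ∑ p ∈ S, p.1 ⊗ₜ[k] p.2) (x w : H) :
    εs k H (εs k H x * w) = εs k H (x * w) := by
  rw [es_apply hS (εs k H x * w), es_apply hS (x*w)]
  refine Finset.sum_congr rfl fun p _ => ?_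
  rw [mul_assoc, S1 hwb hS, mul_assoc]

lemma es_idem (hwb : IsWeakBialgebra k H)
    (hS : Coalgebra.comul (R := k) (1:H) = ∑ p ∈ S, p.1 ⊗ₜ[k] p.2) (x : H) :
    εs k H (εs k H x) = εs k H x := by
  have := F2 hwb hS x 1
  simpa using this

lemma F2t (hwb : IsWeakBialgebra k H)
    (hS : Coalgebra.comul (R := k) (1:H) = ∑ p ∈ S, p.1 ⊗ₜ[k] p.2) (x w : H) :
    εt k H (w * εt k H x) = εt k H (w * x) := by
  rw [et_apply hS (w * εt k H x), et_apply hS (w*x)]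
  refine Finset.sum_congr rfl fun p _ => ?_
  rw [← mul_assoc, S3 hwb hS, mul_assoc]

lemma et_idem (hwb : IsWeakBialgebra k H)
    (hS : Coalgebra.comul (R := k) (1:H) = ∑ p ∈ S, p.1 ⊗ₜ[k] p.2) (x : H) :
    εt k H (εt k H x) = εt k H x := by
  have := F2t hwb hS x 1
  simpa using this

lemma tool_s (hS : Coalgebra.comul (R := k) (1:H) = ∑ p ∈ S, p.1 ⊗ₜ[k] p.2) {h h' : H}
    (e1 : εs k H h = h) (e2 : εs k H h' = h')
    (hp : ∀ c, Coalgebra.counit (R := k) (h * c) = Coalgebra.counit (R := k) (h' * c)) :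
    h = h' := by
  rw [← e1, ← e2, es_apply hS, es_apply hS]
  exact Finset.sum_congr rfl fun p _ => by rw [hp p.2]

lemma tool_P (hS : Coalgebra.comul (R := k) (1:H) = ∑ p ∈ S, p.1 ⊗ₜ[k] p.2) {h h' : H}
    (e1 : Pm k H h = h) (e2 : Pm k H h' = h')
    (hp : ∀ c, Coalgebra.counit (R := k) (c * h) = Coalgebra.counit (R := k) (c * h')) :
    h = h' := by
  rw [← e1, ← e2, Pm_apply hS, Pm_apply hS]
  exact Finset.sum_congr rfl fun p _ => by rw [hp p.2]

lemma tool_t (hS : Coalgebra.comul (R := k) (1:H) = ∑ p ∈ S, p.1 ⊗ₜ[k] p.2) {h h' : H}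
    (e1 : εt k H h = h) (e2 : εt k H h' = h')
    (hp : ∀ c, Coalgebra.counit (R := k) (c * h) = Coalgebra.counit (R := k) (c * h')) :
    h = h' := by
  rw [← e1, ← e2, et_apply hS, et_apply hS]
  exact Finset.sum_congr rfl fun p _ => by rw [hp p.1]

/-- `ε_s(x z) = ε_s(x) z` for `z ∈ H_s`. -/
lemma K10 (hwb : IsWeakBialgebra k H)
    (hS : Coalgebra.comul (R := k) (1:H) = ∑ p ∈ S, p.1 ⊗ₜ[k] p.2) {z : H}
    (hz : IsHs k H z) (x : H) : εs k H (x * z) = εs k H x * z := by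
  refine tool_s hS (es_idem hwb hS _) (((isHs_es hwb hS x).mul hwb hz).es_fix) fun c => ?_
  rw [S1 hwb hS, mul_assoc, mul_assoc, S1 hwb hS]

/-- `ε_t(h x) = h ε_t(x)` for `h ∈ H_t`. -/
lemma K58 (hwb : IsWeakBialgebra k H)
    (hS : Coalgebra.comul (R := k) (1:H) = ∑ p ∈ S, p.1 ⊗ₜ[k] p.2) {h : H}
    (hh : IsHt k H h) (x : H) : εt k H (h * x) = h * εt k H x := by
  refine tool_t hS (et_idem hwb hS _) ((hh.mul hwb (isHt_et hwb hS x)).et_fix) fun c => ?_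
  rw [S3 hwb hS, ← mul_assoc, ← mul_assoc, S3 hwb hS]

/-- `P(y c) = y P(c)` for `y ∈ H_s`. -/
lemma K54 (hwb : IsWeakBialgebra k H)
    (hS : Coalgebra.comul (R := k) (1:H) = ∑ p ∈ S, p.1 ⊗ₜ[k] p.2) {y : H}
    (hy : IsHs k H y) (c : H) : Pm k H (y * c) = y * Pm k H c := by
  refine tool_P hS ((isHs_Pm hwb hS _).Pm_fix) ((hy.mul hwb (isHs_Pm hwb hS c)).Pm_fix)
    fun d => ?_
  rw [S1op hwb hS, ← mul_assoc, ← mul_assoc, S1op hwb hS]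

lemma es_one (hS : Coalgebra.comul (R := k) (1:H) = ∑ p ∈ S, p.1 ⊗ₜ[k] p.2) :
    εs k H (1:H) = 1 := by
  rw [es_apply hS]
  simpa using sum_counit_right hS

end Aux4

section Aux5

variable {k : Type*} [Field k] {H : Type*} [Ring H] [Algebra k H] [Coalgebra k H]
variable {S : Finset (H × H)}

lemma K13 (hwb : IsWeakBialgebra k H)
    (hS : Coalgebra.comul (R := k) (1:H) = ∑ p ∈ S, p.1 ⊗ₜ[k] p.2) :
    ∑ p ∈ S, εs k H p.1 ⊗ₜ[k] p.2 = ∑ p ∈ S, p.1 ⊗ₜ[k] p.2 := by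
  have h := congrArg (rTensor H
      ((TensorProduct.rid k H).toLinearMap ∘ₗ lTensor H (Coalgebra.counit : H →ₗ[k] k)))
    (A2sum hwb hS)
  simp only [map_sum, rTensor_tmul, coe_comp, Function.comp_apply, LinearEquiv.coe_coe,
    Coalgebra.lTensor_counit_comul, TensorProduct.rid_tmul, one_smul, lTensor_tmul,
    TensorProduct.smul_tmul'] at h
  calc ∑ p ∈ S, εs k H p.1 ⊗ₜ[k] p.2
      = ∑ p ∈ S, ∑ q ∈ S,
          (Coalgebra.counit (R := k) (p.1 * q.2) • q.1) ⊗ₜ[k] p.2 := by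
        refine Finset.sum_congr rfl fun p _ => ?_
        rw [es_apply hS, sum_tmul]
    _ = ∑ q ∈ S, ∑ p ∈ S,
          (Coalgebra.counit (R := k) (p.1 * q.2) • q.1) ⊗ₜ[k] p.2 := Finset.sum_comm
    _ = ∑ p ∈ S, p.1 ⊗ₜ[k] p.2 := h.symm

lemma K13' (hwb : IsWeakBialgebra k H)
    (hS : Coalgebra.comul (R := k) (1:H) = ∑ p ∈ S, p.1 ⊗ₜ[k] p.2) :
    ∑ p ∈ S, p.1 ⊗ₜ[k] εt k H p.2 = ∑ p ∈ S, p.1 ⊗ₜ[k] p.2 := by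
  have h := congrArg (rTensor H
      ((TensorProduct.rid k H).toLinearMap ∘ₗ lTensor H (Coalgebra.counit : H →ₗ[k] k)))
    (A2sum hwb hS)
  simp only [map_sum, rTensor_tmul, coe_comp, Function.comp_apply, LinearEquiv.coe_coe,
    Coalgebra.lTensor_counit_comul, TensorProduct.rid_tmul, one_smul, lTensor_tmul,
    TensorProduct.smul_tmul'] at h
  calc ∑ p ∈ S, p.1 ⊗ₜ[k] εt k H p.2
      = ∑ p ∈ S, ∑ q ∈ S,
          (Coalgebra.counit (R := k) (q.1 * p.2) • p.1) ⊗ₜ[k] q.2 := by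
        refine Finset.sum_congr rfl fun p _ => ?_
        rw [et_apply hS, tmul_sum]
        exact Finset.sum_congr rfl fun q _ => by
          rw [tmul_smul, TensorProduct.smul_tmul']
    _ = ∑ p ∈ S, p.1 ⊗ₜ[k] p.2 := h.symm

lemma comm2 (hS : Coalgebra.comul (R := k) (1:H) = ∑ p ∈ S, p.1 ⊗ₜ[k] p.2) {z : H}
    (hz : IsHs k H z) :
    ∑ p ∈ S, p.1 ⊗ₜ[k] (z * p.2) = ∑ p ∈ S, p.1 ⊗ₜ[k] (p.2 * z) := by
  have h := hz.1.symm.trans hz.2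
  rw [hS, Finset.mul_sum, Finset.sum_mul] at h
  simp only [Algebra.TensorProduct.tmul_mul_tmul] at h
  simp only [one_mul, mul_one] at h
  exact h

lemma recon2s (hS : Coalgebra.comul (R := k) (1:H) = ∑ p ∈ S, p.1 ⊗ₜ[k] p.2)
    (T : H ⊗[k] H) :
    lTensor H (εs k H) T = ∑ p ∈ S, ((TensorProduct.rid k H)
      (lTensor H ((Coalgebra.counit : H →ₗ[k] k) ∘ₗ mulRight k p.2) T)) ⊗ₜ[k] p.1 := by
  induction T using TensorProduct.induction_on with
  | zero => simp
  | tmul a b =>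
      simp only [lTensor_tmul, coe_comp, Function.comp_apply, mulRight_apply,
        LinearEquiv.coe_coe, TensorProduct.rid_tmul, es_apply hS, tmul_sum, tmul_smul,
        TensorProduct.smul_tmul']
  | add u v hu hv => simp [hu, hv, Finset.sum_add_distrib, add_tmul]

lemma tool2s (hS : Coalgebra.comul (R := k) (1:H) = ∑ p ∈ S, p.1 ⊗ₜ[k] p.2)
    {T T' : H ⊗[k] H}
    (f1 : lTensor H (εs k H) T = T) (f2 : lTensor H (εs k H) T' = T')
    (hp : ∀ c : H, (TensorProduct.rid k H)
        (lTensor H ((Coalgebra.counit : H →ₗ[k] k) ∘ₗ mulRight k c) T)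
      = (TensorProduct.rid k H)
        (lTensor H ((Coalgebra.counit : H →ₗ[k] k) ∘ₗ mulRight k c) T')) :
    T = T' := by
  rw [← f1, ← f2, recon2s hS T, recon2s hS T']
  exact Finset.sum_congr rfl fun p _ => by rw [hp p.2]

lemma K8core (hwb : IsWeakBialgebra k H)
    (hS : Coalgebra.comul (R := k) (1:H) = ∑ p ∈ S, p.1 ⊗ₜ[k] p.2) {u : H}
    (hu : IsHs k H u) :
    Δs k H u = ∑ p ∈ S, (u * p.1) ⊗ₜ[k] εs k H p.2 := by
  refine tool2s hS ?_ ?_ ?_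
  · rw [Ds_apply hS, map_sum]
    simp only [lTensor_tmul, es_idem hwb hS]
  · rw [map_sum]
    simp only [lTensor_tmul, es_idem hwb hS]
  · intro c
    have hL : (TensorProduct.rid k H)
        (lTensor H ((Coalgebra.counit : H →ₗ[k] k) ∘ₗ mulRight k c) (Δs k H u))
        = ∑ p ∈ S, Coalgebra.counit (R := k) (u * p.2 * c) • p.1 := by
      rw [Ds_apply hS, map_sum, map_sum]
      simp only [lTensor_tmul, coe_comp, Function.comp_apply, mulRight_apply,
        LinearEquiv.coe_coe, TensorProduct.rid_tmul, S1 hwb hS]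
    have hR : (TensorProduct.rid k H)
        (lTensor H ((Coalgebra.counit : H →ₗ[k] k) ∘ₗ mulRight k c)
          (∑ p ∈ S, (u * p.1) ⊗ₜ[k] εs k H p.2))
        = u * Pm k H c := by
      rw [map_sum, map_sum]
      simp only [lTensor_tmul, coe_comp, Function.comp_apply, mulRight_apply,
        LinearEquiv.coe_coe, TensorProduct.rid_tmul, S1 hwb hS]
      rw [Pm_apply hS, Finset.mul_sum]
      exact Finset.sum_congr rfl fun p _ => by rw [mul_smul_comm]
    rw [hL, hR]
    have hc := congrArg (fun w => (TensorProduct.rid k H)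
        (lTensor H ((Coalgebra.counit : H →ₗ[k] k) ∘ₗ mulRight k c) w)) (comm2 hS hu)
    simp only [map_sum, lTensor_tmul, coe_comp, Function.comp_apply, mulRight_apply,
      LinearEquiv.coe_coe, TensorProduct.rid_tmul] at hc
    rw [hc, ← K54 hwb hS hu c, Pm_apply hS]
    exact Finset.sum_congr rfl fun p _ => by rw [mul_assoc]

lemma C10p2core (hwb : IsWeakBialgebra k H)
    (hS : Coalgebra.comul (R := k) (1:H) = ∑ p ∈ S, p.1 ⊗ₜ[k] p.2) {y z : H}
    (hy : IsHs k H y) (hz : IsHs k H z) :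
    Δs k H (y * z) = lTensor H (mulRight k z) (Δs k H y) := by
  have hc := congrArg (lTensor H (εs k H ∘ₗ mulLeft k y)) (comm2 hS hz)
  simp only [map_sum, lTensor_tmul, coe_comp, Function.comp_apply, mulLeft_apply] at hc
  rw [Ds_apply hS (y*z), Ds_apply hS y, map_sum]
  simp only [lTensor_tmul, mulRight_apply]
  calc ∑ p ∈ S, p.1 ⊗ₜ[k] εs k H (y * z * p.2)
      = ∑ p ∈ S, p.1 ⊗ₜ[k] εs k H (y * (z * p.2)) := by
        exact Finset.sum_congr rfl fun p _ => by rw [mul_assoc]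
    _ = ∑ p ∈ S, p.1 ⊗ₜ[k] εs k H (y * (p.2 * z)) := hc
    _ = ∑ p ∈ S, p.1 ⊗ₜ[k] (εs k H (y * p.2) * z) := by
        refine Finset.sum_congr rfl fun p _ => ?_
        rw [← mul_assoc, K10 hwb hS hz]

lemma C10p1core (hwb : IsWeakBialgebra k H)
    (hS : Coalgebra.comul (R := k) (1:H) = ∑ p ∈ S, p.1 ⊗ₜ[k] p.2) {y z : H}
    (hy : IsHs k H y) (hz : IsHs k H z) :
    Δs k H (y * z) = rTensor H (mulLeft k y) (Δs k H z) := by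
  rw [K8core hwb hS (hy.mul hwb hz), K8core hwb hS hz, map_sum]
  simp only [rTensor_tmul, mulLeft_apply]
  exact Finset.sum_congr rfl fun p _ => by rw [mul_assoc]

lemma Ds_one_rep (hwb : IsWeakBialgebra k H)
    (hS : Coalgebra.comul (R := k) (1:H) = ∑ p ∈ S, p.1 ⊗ₜ[k] p.2) {y : H}
    (hy : IsHs k H y) :
    Δs k H y = ∑ p ∈ S, p.1 ⊗ₜ[k] (εs k H p.2 * y) := by
  have h := C10p2core hwb hS isHs_one hy
  rw [one_mul] at h
  rw [h, Ds_apply hS, map_sum]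
  simp only [lTensor_tmul, mulRight_apply, one_mul]

lemma Ds_rep2 (hwb : IsWeakBialgebra k H)
    (hS : Coalgebra.comul (R := k) (1:H) = ∑ p ∈ S, p.1 ⊗ₜ[k] p.2) {y : H}
    (hy : IsHs k H y) :
    Δs k H y = ∑ p ∈ S, εs k H p.1 ⊗ₜ[k] (εs k H p.2 * y) := by
  have h := congrArg (lTensor H (mulRight k y ∘ₗ εs k H)) (K13 hwb hS)
  simp only [map_sum, lTensor_tmul, coe_comp, Function.comp_apply, mulRight_apply] at h
  rw [Ds_one_rep hwb hS hy, ← h]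

lemma rep17M (hwb : IsWeakBialgebra k H)
    (hS : Coalgebra.comul (R := k) (1:H) = ∑ p ∈ S, p.1 ⊗ₜ[k] p.2) {u v : H}
    (hu : IsHs k H u) (hv : IsHs k H v) :
    Δs k H (u * v) = ∑ q ∈ S, (u * εs k H q.1) ⊗ₜ[k] (εs k H q.2 * v) := by
  have h := congrArg (TensorProduct.map (mulLeft k u) (mulRight k v ∘ₗ εs k H)) (K13 hwb hS)
  simp only [map_sum, TensorProduct.map_tmul, coe_comp, Function.comp_apply, mulRight_apply,
    mulLeft_apply] at h
  rw [C10p2core hwb hS hu hv, K8core hwb hS hu, map_sum]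
  simp only [lTensor_tmul, mulRight_apply]
  rw [← h]

lemma eSqSum (hwb : IsWeakBialgebra k H)
    (hS : Coalgebra.comul (R := k) (1:H) = ∑ p ∈ S, p.1 ⊗ₜ[k] p.2) :
    ∑ p ∈ S, ∑ q ∈ S, (p.1 * q.1) ⊗ₜ[k] (p.2 * q.2) = ∑ p ∈ S, p.1 ⊗ₜ[k] p.2 := by
  have h := one_idem hwb
  rw [hS, Finset.sum_mul] at h
  simpa [Finset.mul_sum, Algebra.TensorProduct.tmul_mul_tmul] using h

lemma munit (hwb : IsWeakBialgebra k H)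
    (hS : Coalgebra.comul (R := k) (1:H) = ∑ p ∈ S, p.1 ⊗ₜ[k] p.2) :
    ∑ p ∈ S, εs k H p.1 * εs k H p.2 = 1 := by
  have h1 := congrArg (fun w => (LinearMap.mul' k H) (lTensor H (εs k H) w)) (K13 hwb hS)
  simp only [map_sum, lTensor_tmul, mul'_apply] at h1
  have h2 := congrArg (fun w => (TensorProduct.rid k H)
      (lTensor H (Coalgebra.counit : H →ₗ[k] k) w)) (eSqSum hwb hS)
  simp only [map_sum, lTensor_tmul, LinearEquiv.coe_coe, TensorProduct.rid_tmul] at h2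
  rw [h1]
  calc ∑ p ∈ S, p.1 * εs k H p.2
      = ∑ p ∈ S, ∑ q ∈ S, Coalgebra.counit (R := k) (p.2 * q.2) • (p.1 * q.1) := by
        refine Finset.sum_congr rfl fun p _ => ?_
        rw [es_apply hS, Finset.mul_sum]
        exact Finset.sum_congr rfl fun q _ => by rw [mul_smul_comm]
    _ = ∑ p ∈ S, Coalgebra.counit (R := k) p.2 • p.1 := h2
    _ = 1 := sum_counit_right hS

end Aux5

section Aux6

variable {k : Type*} [Field k] {H : Type*} [Ring H] [Algebra k H] [Coalgebra k H]
variable {S : Finset (H × H)}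

lemma isHs_of_mem (hwb : IsWeakBialgebra k H)
    (hS : Coalgebra.comul (R := k) (1:H) = ∑ p ∈ S, p.1 ⊗ₜ[k] p.2) {y : H}
    (hy : y ∈ LinearMap.range (εs k H)) : IsHs k H y := by
  obtain ⟨x, rfl⟩ := hy
  exact isHs_es hwb hS x

lemma IsHs.mem {y : H} (hy : IsHs k H y) : y ∈ LinearMap.range (εs k H) :=
  ⟨y, hy.es_fix⟩

lemma counit_es (hwb : IsWeakBialgebra k H)
    (hS : Coalgebra.comul (R := k) (1:H) = ∑ p ∈ S, p.1 ⊗ₜ[k] p.2) (x : H) :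
    Coalgebra.counit (R := k) (εs k H x) = Coalgebra.counit (R := k) x := by
  have := S1 hwb hS x 1
  simpa using this

lemma C4core (hwb : IsWeakBialgebra k H)
    (hS : Coalgebra.comul (R := k) (1:H) = ∑ p ∈ S, p.1 ⊗ₜ[k] p.2) {y : H}
    (hy : IsHs k H y) :
    rTensor H (Δs k H) (Δs k H y)
      = (TensorProduct.assoc k H H H).symm (lTensor H (Δs k H) (Δs k H y)) := by
  have hP : ∀ q : H × H, Δs k H (εs k H q.2 * y)
      = ∑ p ∈ S, (εs k H q.2 * εs k H p.1) ⊗ₜ[k] (εs k H p.2 * y) := by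
    intro q
    rw [C10p1core hwb hS (isHs_es hwb hS q.2) hy, Ds_rep2 hwb hS hy, map_sum]
    simp only [rTensor_tmul, mulLeft_apply]
  conv_lhs => rw [Ds_rep2 hwb hS hy]
  conv_rhs => rw [Ds_rep2 hwb hS hy]
  rw [map_sum, map_sum, map_sum]
  simp only [rTensor_tmul, lTensor_tmul]
  calc ∑ p ∈ S, Δs k H (εs k H p.1) ⊗ₜ[k] (εs k H p.2 * y)
      = ∑ p ∈ S, ∑ q ∈ S,
          (εs k H q.1 ⊗ₜ[k] (εs k H q.2 * εs k H p.1)) ⊗ₜ[k] (εs k H p.2 * y) := by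
        refine Finset.sum_congr rfl fun p _ => ?_
        rw [Ds_rep2 hwb hS (isHs_es hwb hS p.1), sum_tmul]
    _ = ∑ q ∈ S, ∑ p ∈ S,
          (εs k H q.1 ⊗ₜ[k] (εs k H q.2 * εs k H p.1)) ⊗ₜ[k] (εs k H p.2 * y) :=
        Finset.sum_comm
    _ = ∑ q ∈ S, (TensorProduct.assoc k H H H).symm
          (εs k H q.1 ⊗ₜ[k] Δs k H (εs k H q.2 * y)) := by
        refine Finset.sum_congr rfl fun q _ => ?_
        rw [hP q, tmul_sum, map_sum]
        exact Finset.sum_congr rfl fun p _ => by rw [TensorProduct.assoc_symm_tmul]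

lemma C5core (hwb : IsWeakBialgebra k H)
    (hS : Coalgebra.comul (R := k) (1:H) = ∑ p ∈ S, p.1 ⊗ₜ[k] p.2) {y : H}
    (hy : IsHs k H y) :
    (TensorProduct.lid k H) (rTensor H (Coalgebra.counit (R := k)) (Δs k H y)) = y ∧
    (TensorProduct.rid k H) (lTensor H (Coalgebra.counit (R := k)) (Δs k H y)) = y := by
  constructor
  · rw [Ds_apply hS, map_sum, map_sum]
    simp only [rTensor_tmul, TensorProduct.lid_tmul]
    calc ∑ p ∈ S, Coalgebra.counit (R := k) p.1 • εs k H (y * p.2)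
        = εs k H (y * ∑ p ∈ S, Coalgebra.counit (R := k) p.1 • p.2) := by
          rw [Finset.mul_sum, map_sum]
          exact Finset.sum_congr rfl fun p _ => by rw [mul_smul_comm, map_smul]
      _ = y := by rw [sum_counit_left hS, mul_one, hy.es_fix]
  · rw [Ds_apply hS, map_sum, map_sum]
    simp only [lTensor_tmul, TensorProduct.rid_tmul, counit_es hwb hS]
    rw [← es_apply hS, hy.es_fix]

lemma C6core (hwb : IsWeakBialgebra k H)
    (hS : Coalgebra.comul (R := k) (1:H) = ∑ p ∈ S, p.1 ⊗ₜ[k] p.2) {y : H}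
    (hy : IsHs k H y) :
    Coalgebra.comul (R := k) y ∈ LinearMap.range (rTensor H (εs k H)) := by
  refine ⟨Coalgebra.comul (R := k) y, ?_⟩
  have h13 := congrArg (lTensor H (mulLeft k y)) (K13 hwb hS)
  simp only [map_sum, lTensor_tmul, mulLeft_apply] at h13
  rw [hy.1, hS, Finset.mul_sum]
  simp only [Algebra.TensorProduct.tmul_mul_tmul, one_mul, map_sum, rTensor_tmul]
  exact h13

lemma C7core (hwb : IsWeakBialgebra k H)
    (hS : Coalgebra.comul (R := k) (1:H) = ∑ p ∈ S, p.1 ⊗ₜ[k] p.2) :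
    Coalgebra.comul (R := k) (1:H)
      ∈ LinearMap.range (TensorProduct.map (εs k H) (εt k H)) := by
  refine ⟨Coalgebra.comul (R := k) (1:H), ?_⟩
  have h13 := congrArg (lTensor H (εt k H)) (K13 hwb hS)
  simp only [map_sum, lTensor_tmul] at h13
  conv_lhs => rw [hS]
  rw [map_sum]
  simp only [TensorProduct.map_tmul]
  rw [h13, K13' hwb hS, ← hS]

lemma C9core (hwb : IsWeakBialgebra k H)
    (hS : Coalgebra.comul (R := k) (1:H) = ∑ p ∈ S, p.1 ⊗ₜ[k] p.2) {y : H}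
    (hy : IsHs k H y) :
    εs k H ((TensorProduct.lid k H)
        (rTensor H (Coalgebra.counit (R := k)) (Coalgebra.comul (R := k) y)))
      = (TensorProduct.lid k H)
        (rTensor H (Coalgebra.counit (R := k)) (Coalgebra.comul (R := k) y)) := by
  have h : (TensorProduct.lid k H)
      (rTensor H (Coalgebra.counit (R := k)) (Coalgebra.comul (R := k) y)) = y := by
    rw [Coalgebra.rTensor_counit_comul]
    simp
  rw [h, hy.es_fix]

lemma C3core (hwb : IsWeakBialgebra k H)
    (hS : Coalgebra.comul (R := k) (1:H) = ∑ p ∈ S, p.1 ⊗ₜ[k] p.2) {y : H}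
    (hy : IsHs k H y) :
    Δs k H y ∈ LinearMap.range (TensorProduct.map (εs k H) (εs k H)) := by
  refine ⟨Δs k H y, ?_⟩
  have h13 := congrArg (lTensor H (εs k H ∘ₗ mulLeft k y)) (K13 hwb hS)
  simp only [map_sum, lTensor_tmul, coe_comp, Function.comp_apply, mulLeft_apply] at h13
  conv_lhs => rw [Ds_apply hS]
  rw [map_sum]
  simp only [TensorProduct.map_tmul, es_idem hwb hS]
  rw [h13, ← Ds_apply hS]

end Aux6

section Aux7

variable {k : Type*} [Field k] {H : Type*} [Ring H] [Algebra k H] [Coalgebra k H]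
variable {S : Finset (H × H)}

/-- `H_s` commutes with the image of `ε_t`. -/
lemma K60 (hS : Coalgebra.comul (R := k) (1:H) = ∑ p ∈ S, p.1 ⊗ₜ[k] p.2) {y : H}
    (hy : IsHs k H y) (c : H) : y * εt k H c = εt k H c * y := by
  have h := congrArg (fun w => (TensorProduct.lid k H)
      (rTensor H ((Coalgebra.counit : H →ₗ[k] k) ∘ₗ mulRight k c) w)) (comm2 hS hy)
  simp only [map_sum, rTensor_tmul, coe_comp, Function.comp_apply, mulRight_apply,
    LinearEquiv.coe_coe, TensorProduct.lid_tmul] at h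
  rw [et_apply hS, Finset.mul_sum, Finset.sum_mul]
  calc ∑ p ∈ S, y * Coalgebra.counit (R := k) (p.1 * c) • p.2
      = ∑ p ∈ S, Coalgebra.counit (R := k) (p.1 * c) • (y * p.2) := by
        exact Finset.sum_congr rfl fun p _ => (mul_smul_comm _ _ _)
    _ = ∑ p ∈ S, Coalgebra.counit (R := k) (p.1 * c) • (p.2 * y) := h
    _ = ∑ p ∈ S, Coalgebra.counit (R := k) (p.1 * c) • p.2 * y := by
        exact Finset.sum_congr rfl fun p _ => (smul_mul_assoc _ _ _).symm

lemma recon1s (hS : Coalgebra.comul (R := k) (1:H) = ∑ p ∈ S, p.1 ⊗ₜ[k] p.2)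
    (T : H ⊗[k] H) :
    rTensor H (εs k H) T = ∑ p ∈ S, p.1 ⊗ₜ[k] ((TensorProduct.lid k H)
      (rTensor H ((Coalgebra.counit : H →ₗ[k] k) ∘ₗ mulRight k p.2) T)) := by
  induction T using TensorProduct.induction_on with
  | zero => simp
  | tmul a b =>
      simp only [rTensor_tmul, coe_comp, Function.comp_apply, mulRight_apply,
        LinearEquiv.coe_coe, TensorProduct.lid_tmul, es_apply hS, sum_tmul,
        TensorProduct.smul_tmul, tmul_smul]
  | add u v hu hv => simp [hu, hv, Finset.sum_add_distrib, tmul_add]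

lemma tool1s (hS : Coalgebra.comul (R := k) (1:H) = ∑ p ∈ S, p.1 ⊗ₜ[k] p.2)
    {T T' : H ⊗[k] H}
    (f1 : rTensor H (εs k H) T = T) (f2 : rTensor H (εs k H) T' = T')
    (hp : ∀ c : H, (TensorProduct.lid k H)
        (rTensor H ((Coalgebra.counit : H →ₗ[k] k) ∘ₗ mulRight k c) T)
      = (TensorProduct.lid k H)
        (rTensor H ((Coalgebra.counit : H →ₗ[k] k) ∘ₗ mulRight k c) T')) :
    T = T' := by
  rw [← f1, ← f2, recon1s hS T, recon1s hS T']
  exact Finset.sum_congr rfl fun p _ => by rw [hp p.2]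

lemma K39t (hwb : IsWeakBialgebra k H)
    (hS : Coalgebra.comul (R := k) (1:H) = ∑ p ∈ S, p.1 ⊗ₜ[k] p.2) (c : H) :
    ∑ q ∈ S, q.1 ⊗ₜ[k] εt k H (q.2 * c) = ∑ q ∈ S, q.1 ⊗ₜ[k] (q.2 * εt k H c) := by
  have hf1 := congrArg (lTensor H (εt k H ∘ₗ mulRight k c)) (K13 hwb hS)
  simp only [map_sum, lTensor_tmul, coe_comp, Function.comp_apply, mulRight_apply] at hf1
  have hf2 := congrArg (lTensor H (mulRight k (εt k H c))) (K13 hwb hS)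
  simp only [map_sum, lTensor_tmul, mulRight_apply] at hf2
  refine tool1s hS ?_ ?_ ?_
  · rw [map_sum]
    simp only [rTensor_tmul]
    exact hf1
  · rw [map_sum]
    simp only [rTensor_tmul]
    exact hf2
  · intro d
    rw [map_sum, map_sum, map_sum, map_sum]
    simp only [rTensor_tmul, coe_comp, Function.comp_apply, mulRight_apply,
      LinearEquiv.coe_coe, TensorProduct.lid_tmul]
    calc ∑ q ∈ S, Coalgebra.counit (R := k) (q.1 * d) • εt k H (q.2 * c)
        = εt k H ((∑ q ∈ S, Coalgebra.counit (R := k) (q.1 * d) • q.2) * c) := by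
          rw [Finset.sum_mul, map_sum]
          exact Finset.sum_congr rfl fun q _ => by rw [smul_mul_assoc, map_smul]
      _ = εt k H (εt k H d * c) := by rw [← et_apply hS]
      _ = εt k H d * εt k H c := K58 hwb hS (isHt_et hwb hS d) c
      _ = (∑ q ∈ S, Coalgebra.counit (R := k) (q.1 * d) • q.2) * εt k H c := by
          rw [← et_apply hS]
      _ = ∑ q ∈ S, Coalgebra.counit (R := k) (q.1 * d) • (q.2 * εt k H c) := by
          rw [Finset.sum_mul]
          exact Finset.sum_congr rfl fun q _ => smul_mul_assoc _ _ _

lemma midrecon (hS : Coalgebra.comul (R := k) (1:H) = ∑ p ∈ S, p.1 ⊗ₜ[k] p.2)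
    (T : (H ⊗[k] H) ⊗[k] H) :
    rTensor H (lTensor H (εs k H)) T
      = ∑ p ∈ S, (rTensor H ((TensorProduct.mk k H H).flip p.1))
          ((rTensor H ((TensorProduct.rid k H).toLinearMap ∘ₗ
            lTensor H ((Coalgebra.counit : H →ₗ[k] k) ∘ₗ mulRight k p.2))) T) := by
  induction T using TensorProduct.induction_on with
  | zero => simp
  | tmul w c' =>
      induction w using TensorProduct.induction_on with
      | zero => simp
      | tmul a b =>
          simp only [rTensor_tmul, lTensor_tmul, coe_comp, Function.comp_apply,
            mulRight_apply, LinearEquiv.coe_coe, TensorProduct.rid_tmul,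
            TensorProduct.mk_apply, flip_apply, es_apply hS]
          rw [tmul_sum, sum_tmul]
          refine Finset.sum_congr rfl fun p _ => ?_
          simp only [tmul_smul, TensorProduct.smul_tmul']
      | add u v hu hv =>
          simp only [add_tmul, map_add, hu, hv, Finset.sum_add_distrib]
  | add u v hu hv => simp [hu, hv, Finset.sum_add_distrib]

lemma toolmid (hS : Coalgebra.comul (R := k) (1:H) = ∑ p ∈ S, p.1 ⊗ₜ[k] p.2)
    {T T' : (H ⊗[k] H) ⊗[k] H}
    (f1 : rTensor H (lTensor H (εs k H)) T = T)
    (f2 : rTensor H (lTensor H (εs k H)) T' = T')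
    (hp : ∀ c : H, (rTensor H ((TensorProduct.rid k H).toLinearMap ∘ₗ
            lTensor H ((Coalgebra.counit : H →ₗ[k] k) ∘ₗ mulRight k c))) T
        = (rTensor H ((TensorProduct.rid k H).toLinearMap ∘ₗ
            lTensor H ((Coalgebra.counit : H →ₗ[k] k) ∘ₗ mulRight k c))) T') :
    T = T' := by
  rw [← f1, ← f2, midrecon hS T, midrecon hS T']
  exact Finset.sum_congr rfl fun p _ => by rw [hp p.2]

end Aux7

section Aux8

variable {k : Type*} [Field k] {H : Type*} [Ring H] [Algebra k H] [Coalgebra k H]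
variable {S : Finset (H × H)}

lemma C8core (hwb : IsWeakBialgebra k H)
    (hS : Coalgebra.comul (R := k) (1:H) = ∑ p ∈ S, p.1 ⊗ₜ[k] p.2) {y : H}
    (hy : IsHs k H y) :
    lTensor (H ⊗[k] H) (LinearMap.mul' k H)
        ((TensorProduct.tensorTensorTensorComm k H H H H)
          (TensorProduct.map (Coalgebra.comul (R := k)) (Coalgebra.comul (R := k))
            (Δs k H y)))
      = rTensor H (Δs k H) (Coalgebra.comul (R := k) y) := by
  have hA : ∀ v : H, Coalgebra.comul (R := k) (εs k H v)
      = ∑ q ∈ S, q.1 ⊗ₜ[k] (q.2 * εs k H v) := by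
    intro v
    rw [comul_es_r hwb hS, hS, Finset.sum_mul]
    simp only [Algebra.TensorProduct.tmul_mul_tmul, mul_one]
  have hB : ∀ p : H × H, Coalgebra.comul (R := k) (εs k H p.2 * y)
      = ∑ r ∈ S, r.1 ⊗ₜ[k] (εs k H p.2 * y * r.2) := by
    intro p
    rw [((isHs_es hwb hS p.2).mul hwb hy).1, hS, Finset.mul_sum]
    simp only [Algebra.TensorProduct.tmul_mul_tmul, one_mul]
  have hkey : ∀ A B : H, ∑ p ∈ S, A * (εs k H p.1 * (εs k H p.2 * B)) = A * B := by
    intro A B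
    have h1 : ∑ p ∈ S, εs k H p.1 * εs k H p.2 * B = B := by
      rw [← Finset.sum_mul, munit hwb hS, one_mul]
    calc ∑ p ∈ S, A * (εs k H p.1 * (εs k H p.2 * B))
        = ∑ p ∈ S, A * (εs k H p.1 * εs k H p.2 * B) := by
          refine Finset.sum_congr rfl fun p _ => ?_
          rw [mul_assoc]
      _ = A * ∑ p ∈ S, εs k H p.1 * εs k H p.2 * B := by rw [Finset.mul_sum]
      _ = A * B := by rw [h1]
  have hL : lTensor (H ⊗[k] H) (LinearMap.mul' k H)
        ((TensorProduct.tensorTensorTensorComm k H H H H)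
          (TensorProduct.map (Coalgebra.comul (R := k)) (Coalgebra.comul (R := k))
            (Δs k H y)))
      = ∑ q ∈ S, ∑ r ∈ S, (q.1 ⊗ₜ[k] r.1) ⊗ₜ[k] (q.2 * y * r.2) := by
    rw [Ds_rep2 hwb hS hy, map_sum, map_sum, map_sum]
    trans (∑ p ∈ S, ∑ q ∈ S, ∑ r ∈ S, (q.1 ⊗ₜ[k] r.1) ⊗ₜ[k]
        (q.2 * εs k H p.1 * (εs k H p.2 * y * r.2)))
    · refine Finset.sum_congr rfl fun p _ => ?_
      rw [TensorProduct.map_tmul, hA p.1, hB p, sum_tmul, map_sum, map_sum]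
      refine Finset.sum_congr rfl fun q _ => ?_
      rw [tmul_sum, map_sum, map_sum]
      refine Finset.sum_congr rfl fun r _ => ?_
      rw [TensorProduct.tensorTensorTensorComm_tmul, lTensor_tmul, mul'_apply]
    · rw [Finset.sum_comm]
      refine Finset.sum_congr rfl fun q _ => ?_
      rw [Finset.sum_comm]
      refine Finset.sum_congr rfl fun r _ => ?_
      rw [← tmul_sum]
      congr 1
      calc ∑ p ∈ S, q.2 * εs k H p.1 * (εs k H p.2 * y * r.2)
          = ∑ p ∈ S, q.2 * (εs k H p.1 * (εs k H p.2 * (y * r.2))) := by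
            refine Finset.sum_congr rfl fun p _ => ?_
            rw [mul_assoc q.2, mul_assoc (εs k H p.2)]
        _ = q.2 * (y * r.2) := hkey q.2 (y * r.2)
        _ = q.2 * y * r.2 := by rw [mul_assoc]
  have hR : rTensor H (Δs k H) (Coalgebra.comul (R := k) y)
      = ∑ p ∈ S, ∑ q ∈ S, (q.1 ⊗ₜ[k] εs k H (p.1 * q.2)) ⊗ₜ[k] (p.2 * y) := by
    rw [hy.2, hS, Finset.sum_mul]
    simp only [Algebra.TensorProduct.tmul_mul_tmul, mul_one, map_sum, rTensor_tmul]
    refine Finset.sum_congr rfl fun p _ => ?_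
    rw [Ds_apply hS, sum_tmul]
  rw [hL, hR]
  refine toolmid hS ?_ ?_ ?_
  · rw [map_sum]
    refine Finset.sum_congr rfl fun q _ => ?_
    have h13 := congrArg (TensorProduct.map ((TensorProduct.mk k H H) q.1)
      (mulLeft k (q.2 * y))) (K13 hwb hS)
    simp only [map_sum, TensorProduct.map_tmul, TensorProduct.mk_apply,
      mulLeft_apply] at h13
    rw [map_sum]
    simp only [rTensor_tmul, lTensor_tmul]
    exact h13
  · rw [map_sum]
    refine Finset.sum_congr rfl fun p _ => ?_
    rw [map_sum]
    simp only [rTensor_tmul, lTensor_tmul, es_idem hwb hS]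
  · intro c
    have hLs : (rTensor H ((TensorProduct.rid k H).toLinearMap ∘ₗ
          lTensor H ((Coalgebra.counit : H →ₗ[k] k) ∘ₗ mulRight k c)))
          (∑ q ∈ S, ∑ r ∈ S, (q.1 ⊗ₜ[k] r.1) ⊗ₜ[k] (q.2 * y * r.2))
        = ∑ q ∈ S, q.1 ⊗ₜ[k] (q.2 * y * εt k H c) := by
      rw [map_sum]
      refine Finset.sum_congr rfl fun q _ => ?_
      rw [map_sum]
      simp only [rTensor_tmul, lTensor_tmul, coe_comp, Function.comp_apply,
        mulRight_apply, LinearEquiv.coe_coe, TensorProduct.rid_tmul]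
      calc ∑ r ∈ S, (Coalgebra.counit (R := k) (r.1 * c) • q.1) ⊗ₜ[k] (q.2 * y * r.2)
          = ∑ r ∈ S, q.1 ⊗ₜ[k] (q.2 * y * (Coalgebra.counit (R := k) (r.1 * c) • r.2)) := by
            refine Finset.sum_congr rfl fun r _ => ?_
            rw [TensorProduct.smul_tmul, mul_smul_comm]
        _ = q.1 ⊗ₜ[k] (q.2 * y * εt k H c) := by
            rw [← tmul_sum, ← Finset.mul_sum, ← et_apply hS]
    have hRs : (rTensor H ((TensorProduct.rid k H).toLinearMap ∘ₗ
          lTensor H ((Coalgebra.counit : H →ₗ[k] k) ∘ₗ mulRight k c)))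
          (∑ p ∈ S, ∑ q ∈ S, (q.1 ⊗ₜ[k] εs k H (p.1 * q.2)) ⊗ₜ[k] (p.2 * y))
        = ∑ q ∈ S, q.1 ⊗ₜ[k] (εt k H (q.2 * c) * y) := by
      rw [map_sum]
      simp only [map_sum]
      rw [Finset.sum_comm]
      refine Finset.sum_congr rfl fun q _ => ?_
      simp only [rTensor_tmul, lTensor_tmul, coe_comp, Function.comp_apply,
        mulRight_apply, LinearEquiv.coe_coe, TensorProduct.rid_tmul, S1 hwb hS]
      calc ∑ p ∈ S, (Coalgebra.counit (R := k) (p.1 * q.2 * c) • q.1) ⊗ₜ[k] (p.2 * y)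
          = ∑ p ∈ S, q.1 ⊗ₜ[k] ((Coalgebra.counit (R := k) (p.1 * (q.2 * c)) • p.2) * y) := by
            refine Finset.sum_congr rfl fun p _ => ?_
            rw [TensorProduct.smul_tmul, smul_mul_assoc, mul_assoc]
        _ = q.1 ⊗ₜ[k] (εt k H (q.2 * c) * y) := by
            rw [← tmul_sum, ← Finset.sum_mul, ← et_apply hS]
    rw [hLs, hRs]
    have h39 := congrArg (lTensor H (mulRight k y)) (K39t hwb hS c)
    simp only [map_sum, lTensor_tmul, mulRight_apply] at h39
    rw [h39]
    refine Finset.sum_congr rfl fun q _ => ?_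
    rw [mul_assoc, mul_assoc, K60 hS hy c]

end Aux8


/-- Over a weak bialgebra `H`, the counital subalgebra `H_s` — with its
algebra structure inherited from `H`, coalgebra structure `Δ_s(y) = 1₁ ⊗ ε_s(y 1₂)` and
counit `ε|_{H_s}`, and coaction `Δ|_{H_s}` — is a right `H`-comodule Frobenius algebra;
equivalently, it is a Frobenius algebra in the monoidal category `𝓜^H` of right
`H`-comodules (being its unit object). -/
theorem Hs_frobenius (hwb : IsWeakBialgebra k H) :
    -- `H_s` is a subalgebra of `H`
    (1 : H) ∈ LinearMap.range (εs k H) ∧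
    (∀ y z : H, y ∈ LinearMap.range (εs k H) → z ∈ LinearMap.range (εs k H) →
      y * z ∈ LinearMap.range (εs k H)) ∧
    -- `Δ_s` maps `H_s` into `H_s ⊗ H_s` and is coassociative and counital on `H_s`
    (∀ y : H, y ∈ LinearMap.range (εs k H) →
      Δs k H y ∈ LinearMap.range (TensorProduct.map (εs k H) (εs k H))) ∧
    (∀ y : H, y ∈ LinearMap.range (εs k H) →
      rTensor H (Δs k H) (Δs k H y)
        = (TensorProduct.assoc k H H H).symm (lTensor H (Δs k H) (Δs k H y))) ∧
    (∀ y : H, y ∈ LinearMap.range (εs k H) →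
      (TensorProduct.lid k H) (rTensor H (Coalgebra.counit (R := k)) (Δs k H y)) = y ∧
      (TensorProduct.rid k H) (lTensor H (Coalgebra.counit (R := k)) (Δs k H y)) = y) ∧
    -- `H_s` is a right `H`-comodule via `Δ|_{H_s}`: the coaction lands in `H_s ⊗ H`
    (∀ y : H, y ∈ LinearMap.range (εs k H) →
      Coalgebra.comul (R := k) y ∈ LinearMap.range (rTensor H (εs k H))) ∧
    -- comodule-algebra condition: `ρ(1_{H_s}) = Δ(1) ∈ H_s ⊗ H_t`
    Coalgebra.comul (R := k) (1 : H) ∈ LinearMap.range (TensorProduct.map (εs k H) (εt k H)) ∧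
    -- comodule-coalgebra conditions for `(H_s, Δ_s, ε|_{H_s})` with coaction `Δ|_{H_s}`:
    -- `c₁₍₀₎ ⊗ c₂₍₀₎ ⊗ c₁₍₁₎c₂₍₁₎ = c₍₀₎₁ ⊗ c₍₀₎₂ ⊗ c₍₁₎`
    (∀ y : H, y ∈ LinearMap.range (εs k H) →
      lTensor (H ⊗[k] H) (LinearMap.mul' k H)
        ((TensorProduct.tensorTensorTensorComm k H H H H)
          (TensorProduct.map (Coalgebra.comul (R := k)) (Coalgebra.comul (R := k))
            (Δs k H y)))
        = rTensor H (Δs k H) (Coalgebra.comul (R := k) y)) ∧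
    -- `ε(c₍₀₎) c₍₁₎ = ε(c₍₀₎) ε_s(c₍₁₎)`
    (∀ y : H, y ∈ LinearMap.range (εs k H) →
      εs k H ((TensorProduct.lid k H)
          (rTensor H (Coalgebra.counit (R := k)) (Coalgebra.comul (R := k) y)))
        = (TensorProduct.lid k H)
            (rTensor H (Coalgebra.counit (R := k)) (Coalgebra.comul (R := k) y))) ∧
    -- the Frobenius condition `(m ⊗ id)(id ⊗ Δ_s) = Δ_s m = (id ⊗ m)(Δ_s ⊗ id)` on `H_s`
    (∀ y z : H, y ∈ LinearMap.range (εs k H) → z ∈ LinearMap.range (εs k H) →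
      Δs k H (y * z) = rTensor H (mulLeft k y) (Δs k H z) ∧
      Δs k H (y * z) = lTensor H (mulRight k z) (Δs k H y)) := by
  obtain ⟨S, hS⟩ := TensorProduct.exists_finset (Coalgebra.comul (R := k) (1:H))
  refine ⟨⟨1, es_one hS⟩, ?_, ?_, ?_, ?_, ?_, C7core hwb hS, ?_, ?_, ?_⟩
  · intro y z hy hz
    exact ((isHs_of_mem hwb hS hy).mul hwb (isHs_of_mem hwb hS hz)).mem
  · intro y hy
    exact C3core hwb hS (isHs_of_mem hwb hS hy)
  · intro y hy
    exact C4core hwb hS (isHs_of_mem hwb hS hy)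
  · intro y hy
    exact C5core hwb hS (isHs_of_mem hwb hS hy)
  · intro y hy
    exact C6core hwb hS (isHs_of_mem hwb hS hy)
  · intro y hy
    exact C8core hwb hS (isHs_of_mem hwb hS hy)
  · intro y hy
    exact C9core hwb hS (isHs_of_mem hwb hS hy)
  · intro y z hy hz
    exact ⟨C10p1core hwb hS (isHs_of_mem hwb hS hy) (isHs_of_mem hwb hS hz),
           C10p2core hwb hS (isHs_of_mem hwb hS hy) (isHs_of_mem hwb hS hz)⟩


end WeakBialgebraStmt
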